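/- arXiv:math/0605711 — 2 statements merged into one kernel-verified Lean document; each statement's English description precedes it below -/
import Mathlib

section
/- For every natural number m, one has F (2m+2) = (F (m+1))² + (ξ·h) · (F m)² in R. (Lemma 4.1(2), second identity, reindexed to avoid m−1.) -/
/- Context: `R = ℤ[ε,ξ,h]/(2ε)`, `F 0 = 1`, `F 1 = ε`,
`F (m+2) = ε·F(m+1) + (ξh)·F m`.
Statement 0 (Lemma 4.1(1)): closed formula
`F m = ∑_{a+2b=m} C(a+b,b) ε^a ξ^b h^b = ∑_{b=0}^{⌊m/2⌋} C(m-b,b) ε^(m-2b) (ξh)^b`. -/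

noncomputable section

open MvPolynomial

abbrev Rpre : Type := MvPolynomial (Fin 3) ℤ

def Rideal : Ideal Rpre := Ideal.span {2 * X 0}

abbrev Rring : Type := Rpre ⧸ Rideal

def ε : Rring := Ideal.Quotient.mk Rideal (X 0)
def ξ : Rring := Ideal.Quotient.mk Rideal (X 1)
def h : Rring := Ideal.Quotient.mk Rideal (X 2)

def F : ℕ → Rring
  | 0 => 1
  | 1 => ε
  | m + 2 => ε * F (m + 1) + (ξ * h) * F m

lemma F_add (n m : ℕ) : F (m + n + 2) = F (m + 1) * F (n + 1) + (ξ * h) * (F m * F n) := by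
  induction n generalizing m with
  | zero => simp [F]; ring
  | succ n ih =>
    have h1 : m + (n + 1) + 2 = (m + 1) + n + 2 := by ring
    rw [h1, ih (m + 1)]
    rw [show F (m + 1 + 1) = ε * F (m + 1) + (ξ * h) * F m from rfl,
      show F (n + 1 + 1) = ε * F (n + 1) + (ξ * h) * F n from rfl]
    ring

/- Statement 2 (Lemma 4.1(2), second identity): `F (2m+2) = (F (m+1))² + (ξh)·(F m)²`. -/
theorem F_even_square (m : ℕ) :
    F (2 * m + 2) = (F (m + 1)) ^ 2 + (ξ * h) * (F m) ^ 2 := by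
  have := F_add m m
  rw [show 2 * m + 2 = m + m + 2 by ring, this]
  ring

end
end

section
/- Let p := ε·y + (ξ·h)·y² in the formal power series ring R[[y]] (with ε, ξ, h regarded as constants). Then the power series H := Σ_{k≥0} (F k)² · y^(2k) satisfies H · (1 − p²) = 1 in R[[y]]; that is, Σ_{k≥0} (F k)²·y^(2k) is the multiplicative inverse of 1 − (ε·y + ξ·h·y²)². (The generating-function identity H = 1/(1−p(y)²) of Section 4.) -/
/-! Because `2ε = 0`, squaring kills every cross term: `p² = ε²y² + (ξh)²y⁴`, and the squares
`F k ^ 2` satisfy the recurrence `G (m+2) = ε² G (m+1) + (ξh)² G m` with `G 0 = 1`, `G 1 = ε²`.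
Hence `H` is the substitution `y ↦ y²` of the generating function of `G`, and `1 - p²` the same
substitution of `1 - ε²y - (ξh)²y²`. Multiplying the generating function of a second-order
linear recurrence by its characteristic polynomial leaves only the initial terms, here `1`. -/

noncomputable section

open MvPolynomial

def p : PowerSeries Rring :=
  PowerSeries.C ε * PowerSeries.X + PowerSeries.C (ξ * h) * PowerSeries.X ^ 2

def H : PowerSeries Rring :=
  PowerSeries.mk fun n => if Even n then (F (n / 2)) ^ 2 else 0

theorem add_sq_of_two_mul_mul_eq_zero {R : Type*} [CommSemiring R] {x y : R}
    (hxy : 2 * x * y = 0) : (x + y) ^ 2 = x ^ 2 + y ^ 2 := by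
  rw [add_sq, hxy, add_zero]

theorem PowerSeries.mk_mul_one_sub_eq_of_linear_recurrence {R : Type*} [CommRing R]
    {u : ℕ → R} {a b : R} (hu : ∀ n, u (n + 2) = a * u (n + 1) + b * u n) :
    mk u * (1 - C a * X - C b * X ^ 2) = C (u 0) + C (u 1 - a * u 0) * X := by
  ext n
  rw [mul_sub, mul_sub, mul_one, mul_left_comm, mul_left_comm (mk u)]
  rcases n with _ | _ | n
  · simp
  · simp [coeff_mul_X_pow']
  · simp [coeff_mul_X_pow', hu]

theorem two_mul_ε : (2 : Rring) * ε = 0 := by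
  have : ((2 * X 0 : Rpre) : Rring) = 0 :=
    Ideal.Quotient.eq_zero_iff_mem.mpr (Ideal.subset_span rfl)
  simpa [ε, map_mul, map_ofNat] using this

theorem F_sq_add_two (m : ℕ) :
    F (m + 2) ^ 2 = ε ^ 2 * F (m + 1) ^ 2 + (ξ * h) ^ 2 * F m ^ 2 := by
  rw [F, add_sq_of_two_mul_mul_eq_zero
    (by linear_combination F (m + 1) * (ξ * h) * F m * two_mul_ε), mul_pow, mul_pow]

theorem p_sq : p ^ 2 = PowerSeries.C (ε ^ 2) * PowerSeries.X ^ 2 +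
    PowerSeries.C ((ξ * h) ^ 2) * PowerSeries.X ^ 4 := by
  have cross : (2 : PowerSeries Rring) * (PowerSeries.C ε * PowerSeries.X) *
      (PowerSeries.C (ξ * h) * PowerSeries.X ^ 2) = 0 := by
    calc _ = PowerSeries.C (2 * ε) * (PowerSeries.C (ξ * h) * PowerSeries.X ^ 3) := by
          simp only [map_mul, map_ofNat]; ring
      _ = 0 := by rw [two_mul_ε, map_zero, zero_mul]
  rw [p, add_sq_of_two_mul_mul_eq_zero cross]
  simp only [map_pow]
  ring

theorem H_eq_expand :
    H = PowerSeries.expand 2 two_ne_zero (PowerSeries.mk fun k => F k ^ 2) := by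
  ext n
  simp [H, PowerSeries.coeff_expand, even_iff_two_dvd]

theorem one_sub_p_sq_eq_expand : 1 - p ^ 2 = PowerSeries.expand 2 two_ne_zero
    (1 - PowerSeries.C (ε ^ 2) * PowerSeries.X -
      PowerSeries.C ((ξ * h) ^ 2) * PowerSeries.X ^ 2) := by
  simp only [p_sq, map_sub, map_one, map_mul, map_pow, PowerSeries.expand_C, PowerSeries.expand_X]
  ring

theorem H_mul_one_sub_p_sq : H * (1 - p ^ 2) = 1 := by
  rw [H_eq_expand, one_sub_p_sq_eq_expand, ← map_mul,
    PowerSeries.mk_mul_one_sub_eq_of_linear_recurrence F_sq_add_two]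
  simp [F]

end
end
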